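/- Every disk D(v,r) of an α_i-metric graph G is d^{2i-1}-convex: for any two vertices x,y ∈ D(v,r) with d(x,y) ≥ 2i-1, the entire interval I(x,y) is contained in D(v,r). -/

import Mathlib

/-!
Suppose some `z ∈ I(x,y)` lies outside `D(v,r)`, and follow a geodesic from `x` to `y` through
`z`. Its distance to `v` starts at most `r`, exceeds `r` at `z` and changes by at most one per
step, so the geodesic leaves `D(v,r)` along an edge `ab` with `d(v,a) = r` before `z`. Then
`a ∈ I(v,b)` and `b ∈ I(a,y)`, so `α_i` gives `r + d(a,y) ≤ d(v,y) + i ≤ r + i`, i.e. the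
geodesic reaches `z` less than `i` steps before `y`. Running the same argument from `y` shows
that `z` is also less than `i` steps after `x`, hence `d(x,y) ≤ 2i - 2`.
-/

open SimpleGraph

variable {V : Type*}

/-- `Itv G u v x` means `x` lies on a shortest `(u,v)`-path, i.e. `x ∈ I(u,v)`. -/
def Itv (G : SimpleGraph V) (u v x : V) : Prop :=
  G.dist u x + G.dist x v = G.dist u v

/-- `G` is an `α_i`-metric graph. -/
def AlphaI (G : SimpleGraph V) (i : ℕ) : Prop :=
  ∀ u v w x : V, Itv G u w v → Itv G v x w → G.Adj v w →
    G.dist u v + G.dist v x ≤ G.dist u x + i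

/-- Eccentricity of a vertex. -/
noncomputable def ecc (G : SimpleGraph V) [Fintype V] (v : V) : ℕ :=
  Finset.univ.sup (fun u => G.dist v u)

/-- Radius of the graph. -/
noncomputable def grad (G : SimpleGraph V) [Fintype V] [Nonempty V] : ℕ :=
  Finset.univ.inf' Finset.univ_nonempty (fun v => ecc G v)

/-- Diameter of the graph. -/
noncomputable def gdiam (G : SimpleGraph V) [Fintype V] : ℕ :=
  Finset.univ.sup (fun v => ecc G v)

variable {G : SimpleGraph V}

lemma Itv.symm {x y z : V} (h : Itv G x y z) : Itv G y x z := by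
  unfold Itv at *
  rw [G.dist_comm (u := y), G.dist_comm (u := z) (v := x), G.dist_comm (u := y) (v := x)]
  omega

lemma Nat.exists_eq_and_succ_eq_of_lt {f : ℕ → ℕ} (hf : ∀ j, f (j + 1) ≤ f j + 1)
    {r m : ℕ} (h0 : f 0 ≤ r) (hm : r < f m) : ∃ a < m, f a = r ∧ f (a + 1) = r + 1 := by
  induction m with
  | zero => omega
  | succ m ih =>
    by_cases hrm : r < f m
    · obtain ⟨a, ham, ha⟩ := ih hrm
      exact ⟨a, by omega, ha⟩
    · have := hf m
      exact ⟨m, by omega, by omega, by omega⟩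

namespace SimpleGraph

lemma Walk.dist_getVert_succ_le {x y : V} (W : G.Walk x y) (v : V) (j : ℕ) :
    G.dist v (W.getVert (j + 1)) ≤ G.dist v (W.getVert j) + 1 := by
  by_cases hj : j < W.length
  · rcases (W.adj_getVert_succ hj).diff_dist_adj (u := v) with h | h | h <;> omega
  · rw [W.getVert_of_length_le (by omega : W.length ≤ j + 1),
      W.getVert_of_length_le (by omega : W.length ≤ j)]
    omega

lemma Walk.dist_getVert_eq_length_sub {x y : V} {W : G.Walk x y} (hW : W.length = G.dist x y)
    (j : ℕ) : G.dist (W.getVert j) y = W.length - j := by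
  rw [← W.drop_length j]
  exact (length_eq_dist_of_subwalk hW (W.isSubwalk_drop j)).symm

lemma Connected.exists_walk_length_eq_dist_getVert (hG : G.Connected) {x y z : V}
    (hz : Itv G x y z) : ∃ W : G.Walk x y, W.length = G.dist x y ∧ W.getVert (G.dist x z) = z := by
  obtain ⟨W₁, hW₁⟩ := hG.exists_walk_length_eq_dist x z
  obtain ⟨W₂, hW₂⟩ := hG.exists_walk_length_eq_dist z y
  refine ⟨W₁.append W₂, by rw [Walk.length_append, hW₁, hW₂]; exact hz, ?_⟩
  rw [Walk.getVert_append, ← hW₁]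
  simp

end SimpleGraph

namespace AlphaI

variable {i : ℕ}

lemma add_dist_le_of_adj (hα : AlphaI G i) {v a b y : V} (hab : G.Adj a b)
    (hva : G.dist v a + 1 = G.dist v b) (hay : G.dist a y = G.dist b y + 1) :
    G.dist v a + G.dist a y ≤ G.dist v y + i := by
  have hab' : G.dist a b = 1 := dist_eq_one_iff_adj.mpr hab
  refine hα v a b y ?_ ?_ hab <;> unfold Itv <;> omega

lemma add_length_lt_of_lt_dist_getVert (hα : AlphaI G i) {x y v : V} {W : G.Walk x y}
    (hW : W.length = G.dist x y) {r m : ℕ} (hx : G.dist v x ≤ r)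
    (hm : r < G.dist v (W.getVert m)) : r + W.length < G.dist v y + i + m := by
  obtain ⟨a, ham, ha, ha₁⟩ := Nat.exists_eq_and_succ_eq_of_lt
    (f := fun j ↦ G.dist v (W.getVert j)) (W.dist_getVert_succ_le v) (by simpa using hx) hm
  have haW : a < W.length := by
    by_contra! h
    rw [W.getVert_of_length_le h] at ha
    rw [W.getVert_of_length_le (by omega)] at ha₁
    omega
  have := hα.add_dist_le_of_adj (v := v) (y := y) (W.adj_getVert_succ haW) (by omega)
    (by rw [W.dist_getVert_eq_length_sub hW, W.dist_getVert_eq_length_sub hW]; omega)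
  rw [ha, W.dist_getVert_eq_length_sub hW] at this
  omega

end AlphaI

theorem stmt_2_general (G : SimpleGraph V) (hG : G.Connected) (i : ℕ)
    (hα : AlphaI G i) (v : V) (r : ℕ) (x y z : V)
    (hx : G.dist v x ≤ r) (hy : G.dist v y ≤ r)
    (hd : 2 * i - 1 ≤ G.dist x y) (hz : Itv G x y z) :
    G.dist v z ≤ r := by
  by_contra! hvz
  obtain ⟨W, hW, hWz⟩ := hG.exists_walk_length_eq_dist_getVert hz
  obtain ⟨W', hW', hW'z⟩ := hG.exists_walk_length_eq_dist_getVert hz.symm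
  have hxz := hα.add_length_lt_of_lt_dist_getVert hW hx (hWz ▸ hvz)
  have hyz := hα.add_length_lt_of_lt_dist_getVert hW' hy (hW'z ▸ hvz)
  rw [hW] at hxz
  rw [hW', G.dist_comm (u := y) (v := x), G.dist_comm (u := y) (v := z)] at hyz
  unfold Itv at hz
  omega

theorem stmt_2 [Fintype V] (G : SimpleGraph V) (hG : G.Connected) (i : ℕ)
    (hα : AlphaI G i) (v : V) (r : ℕ) (x y z : V)
    (hx : G.dist v x ≤ r) (hy : G.dist v y ≤ r)
    (hd : 2 * i - 1 ≤ G.dist x y) (hz : Itv G x y z) :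
    G.dist v z ≤ r :=
  stmt_2_general G hG i hα v r x y z hx hy hd hz
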